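/- Let 𝒮 be an IP family of finite subsets of ℕ and let c : NU(𝒮) → Fin r. Then either (1) there is an IP family 𝒮' ⊆ 𝒮 such that c is constant on NU(𝒮'), or (2) there is a finite collection ℬ ⊆ NU(𝒮) and an IP family 𝒯 ⊆ 𝒮 − ℬ such that ℬ full-matches every element of NU(𝒯), i.e., for every T ∈ NU(𝒯) there is B ∈ ℬ disjoint from T with c(B) = c(T) = c(B ∪ T). -/

import Mathlib

/-- The set of nonempty unions of finitely many members of `𝒮`. -/
def NU (𝒮 : Set (Finset ℕ)) : Set (Finset ℕ) :=
  {T | T.Nonempty ∧ ∃ F : Finset (Finset ℕ), ↑F ⊆ 𝒮 ∧ T = F.sup id}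

/-- `𝒮` is an IP family: closed under finite unions and containing an infinite
pairwise disjoint subfamily. -/
def IsIP (𝒮 : Set (Finset ℕ)) : Prop :=
  (∀ A ∈ 𝒮, ∀ B ∈ 𝒮, A ∪ B ∈ 𝒮) ∧
    ∃ 𝒟 ⊆ 𝒮, 𝒟.Infinite ∧ 𝒟.Pairwise Disjoint

/-- `𝒮` generates an IP set: it contains infinitely many pairwise disjoint elements. -/
def GeneratesIP (𝒮 : Set (Finset ℕ)) : Prop :=
  ∃ 𝒟 ⊆ 𝒮, 𝒟.Infinite ∧ 𝒟.Pairwise Disjoint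

/-- `𝒮 − ℬ`: the members of `𝒮` disjoint from every member of `ℬ`. -/
def SMinus (𝒮 ℬ : Set (Finset ℕ)) : Set (Finset ℕ) :=
  {T ∈ 𝒮 | ∀ B ∈ ℬ, Disjoint T B}

/-- `𝒟` half-matches `B` with respect to the coloring `c`. -/
def HalfMatch {α : Type*} (c : Finset ℕ → α) (𝒟 : Set (Finset ℕ)) (B : Finset ℕ) : Prop :=
  ∃ D ∈ 𝒟, Disjoint D B ∧ c B = c (D ∪ B)

/-- `𝒟` full-matches `B` with respect to the coloring `c`. -/
def FullMatch {α : Type*} (c : Finset ℕ → α) (𝒟 : Set (Finset ℕ)) (B : Finset ℕ) : Prop :=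
  ∃ D ∈ 𝒟, Disjoint D B ∧ c D = c B ∧ c B = c (D ∪ B)

/-!
Alternative (1) always holds: it is the finite unions theorem, Hindman's theorem for unions of
disjoint finite sets. That theorem follows from Hindman's finite sums theorem in `Multiset ℕ`
applied to a pairwise disjoint sequence `D j` of members of `𝒮`: a sum of multisets has no
repeated element exactly when the summands are nodup and pairwise disjoint, so a finite sums set
lying inside the finite sums of the `D j` is automatically generated by pairwise disjoint finite
unions of the `D j`.
-/

open Function Hindman

theorem Hindman.FS.exists_finsetSum_eq {M : Type*} [AddCommMonoid M] {a : Stream' M} {m : M}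
    (hm : m ∈ FS a) : ∃ s : Finset ℕ, s.Nonempty ∧ ∑ i ∈ s, a.get i = m := by
  induction hm with
  | head' a => exact ⟨{0}, Finset.singleton_nonempty 0, by simp [Stream'.head]⟩
  | tail' a m _ ih =>
    obtain ⟨s, hs, rfl⟩ := ih
    exact ⟨s.map (addRightEmbedding 1), hs.map, by simp [Stream'.get_tail]⟩
  | cons' a m _ ih =>
    obtain ⟨s, hs, rfl⟩ := ih
    refine ⟨.cons 0 (s.map (addRightEmbedding 1)) (by simp), Finset.cons_nonempty _, ?_⟩
    simp [Stream'.get_tail, Stream'.head]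

theorem Finset.sum_val_eq_sup_val {ι α : Type*} [DecidableEq α] {s : Finset ι}
    {f : ι → Finset α} (hf : (s : Set ι).PairwiseDisjoint f) :
    ∑ i ∈ s, (f i).val = (s.sup f).val := by
  rw [Finset.sup_eq_biUnion, ← Finset.disjiUnion_eq_biUnion _ _ hf]
  rfl

theorem NU_subset_of_supClosed {𝒮 : Set (Finset ℕ)} (h𝒮 : SupClosed 𝒮) : NU 𝒮 ⊆ 𝒮 := by
  rintro _ ⟨hne, F, hF𝒮, rfl⟩
  have hF : F.Nonempty := Finset.nonempty_of_ne_empty fun h ↦ by simp [h] at hne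
  exact h𝒮.finsetSup_mem hF fun X hX ↦ hF𝒮 hX

theorem GeneratesIP.exists_seq {𝒮 : Set (Finset ℕ)} (h : GeneratesIP 𝒮) :
    ∃ D : ℕ → Finset ℕ, (∀ j, D j ∈ 𝒮) ∧ (∀ j, (D j).Nonempty) ∧ Pairwise (Disjoint on D) := by
  obtain ⟨𝒟, h𝒟𝒮, h𝒟, h𝒟disj⟩ := h
  let e := Set.Infinite.natEmbedding _ (h𝒟.sdiff (Set.finite_singleton ∅))
  have he : ∀ j, (e j : Finset ℕ) ∈ 𝒟 \ {∅} := fun j ↦ (e j).2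
  refine ⟨fun j ↦ e j, fun j ↦ h𝒟𝒮 (he j).1, fun j ↦ Finset.nonempty_iff_ne_empty.2 (he j).2,
    fun j k hjk ↦ h𝒟disj (he j).1 (he k).1 fun h ↦ hjk (e.injective (Subtype.ext h))⟩

def finiteUnions (E : ℕ → Finset ℕ) : Set (Finset ℕ) :=
  {X | ∃ J : Finset ℕ, J.Nonempty ∧ J.sup E = X}

section finiteUnions

variable {E : ℕ → Finset ℕ}

theorem supClosed_finiteUnions : SupClosed (finiteUnions E) := by
  rintro _ ⟨J, hJ, rfl⟩ _ ⟨J', -, rfl⟩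
  exact ⟨J ∪ J', hJ.mono Finset.subset_union_left, Finset.sup_union⟩

theorem finiteUnions_subset {𝒮 : Set (Finset ℕ)} (h𝒮 : SupClosed 𝒮) (hE : ∀ j, E j ∈ 𝒮) :
    finiteUnions E ⊆ 𝒮 := by
  rintro _ ⟨J, hJ, rfl⟩
  exact h𝒮.finsetSup_mem hJ fun j _ ↦ hE j

theorem nonempty_of_mem_finiteUnions (hE : ∀ j, (E j).Nonempty) {X : Finset ℕ}
    (hX : X ∈ finiteUnions E) : X.Nonempty := by
  obtain ⟨J, ⟨j, hj⟩, rfl⟩ := hX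
  exact (hE j).mono (Finset.le_sup hj)

theorem isIP_finiteUnions (hdisj : Pairwise (Disjoint on E)) (hE : ∀ j, (E j).Nonempty) :
    IsIP (finiteUnions E) := by
  refine ⟨supClosed_finiteUnions, Set.range E, ?_, Set.infinite_range_of_injective ?_,
    hdisj.range_pairwise⟩
  · rintro _ ⟨j, rfl⟩
    exact ⟨{j}, Finset.singleton_nonempty j, Finset.sup_singleton⟩
  · refine pairwise_ne_iff_injective.1 fun j k hjk hE' ↦ (hE k).ne_empty ?_
    simpa [onFun, hE'] using hdisj hjk

end finiteUnions

theorem exists_monochromatic_finiteUnions {α : Type*} [Finite α] (c : Finset ℕ → α)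
    {D : ℕ → Finset ℕ} (hD : Pairwise (Disjoint on D)) :
    ∃ E : ℕ → Finset ℕ, Pairwise (Disjoint on E) ∧ (∀ j, E j ∈ finiteUnions D) ∧
      ∃ i, ∀ X ∈ finiteUnions E, c X = i := by
  classical
  let a : Stream' (Multiset ℕ) := fun j ↦ (D j).val
  have hFS : ∀ m ∈ FS a, ∃ X ∈ finiteUnions D, X.val = m := by
    intro m hm
    obtain ⟨J, hJ, rfl⟩ := FS.exists_finsetSum_eq hm
    exact ⟨J.sup D, ⟨J, hJ, rfl⟩, (Finset.sum_val_eq_sup_val (hD.set_pairwise _)).symm⟩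
  have hcov : FS a ⊆ ⋃₀ Set.range fun i ↦ {m | m ∈ FS a ∧ c m.toFinset = i} :=
    fun m hm ↦ ⟨_, ⟨c m.toFinset, rfl⟩, hm, rfl⟩
  obtain ⟨_, ⟨i, rfl⟩, b, hb⟩ := FS_partition_regular a _ (Set.finite_range _) hcov
  have hnodup : ∀ m ∈ FS b, m.Nodup := fun m hm ↦ by
    obtain ⟨X, -, rfl⟩ := hFS m (hb hm).1
    exact X.nodup
  let E : ℕ → Finset ℕ := fun j ↦ (b.get j).toFinset
  have hsum : ∀ J : Finset ℕ, ∑ j ∈ J, b.get j = ∑ j ∈ J, (E j).val := fun J ↦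
    Finset.sum_congr rfl fun j _ ↦ ((hnodup _ (FS.singleton b j)).dedup).symm
  have hEdisj : Pairwise (Disjoint on E) := fun j k hjk ↦ by
    have h := hnodup _ (FS.finsetSum b {j, k} (Finset.insert_nonempty _ _))
    rw [hsum, Finset.sum_pair hjk, Multiset.nodup_add] at h
    exact Finset.disjoint_val.1 h.2.2
  refine ⟨E, hEdisj, fun j ↦ ?_, i, ?_⟩
  · obtain ⟨X, hX, hXb⟩ := hFS _ (hb (FS.singleton b j)).1
    simpa [E, ← hXb] using hX
  · rintro _ ⟨J, hJ, rfl⟩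
    have h := (hb (FS.finsetSum b J hJ)).2
    rwa [hsum, Finset.sum_val_eq_sup_val (hEdisj.set_pairwise _), Finset.val_toFinset] at h

/-- The full-matching lemma: either the coloring is constant on an IP subfamily, or
some finite collection full-matches an IP family. -/
theorem full_match (r : ℕ) (𝒮 : Set (Finset ℕ)) (hS : IsIP 𝒮)
    (c : Finset ℕ → Fin r) :
    (∃ 𝒮' ⊆ 𝒮, IsIP 𝒮' ∧ ∃ i : Fin r, ∀ S ∈ NU 𝒮', c S = i) ∨
    (∃ ℬ : Finset (Finset ℕ), ↑ℬ ⊆ NU 𝒮 ∧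
      ∃ 𝒯 ⊆ SMinus 𝒮 ↑ℬ, IsIP 𝒯 ∧
        ∀ T ∈ NU 𝒯, ∃ B ∈ ℬ, Disjoint B T ∧ c B = c T ∧ c T = c (B ∪ T)) := by
  left
  obtain ⟨hS𝒮, hgen⟩ := hS
  obtain ⟨D, hD𝒮, hDne, hDdisj⟩ := GeneratesIP.exists_seq hgen
  obtain ⟨E, hEdisj, hED, i, hi⟩ := exists_monochromatic_finiteUnions c hDdisj
  have hEne : ∀ j, (E j).Nonempty := fun j ↦ nonempty_of_mem_finiteUnions hDne (hED j)
  refine ⟨finiteUnions E, finiteUnions_subset hS𝒮 fun j ↦ finiteUnions_subset hS𝒮 hD𝒮 (hED j),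
    isIP_finiteUnions hEdisj hEne, i,
    fun S hS ↦ hi S (NU_subset_of_supClosed supClosed_finiteUnions hS)⟩
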